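/- Let D = (D_𝐒)_𝐒 be an operator-collection such that for every word 𝐒 with D_𝐒 ≠ 0, both S_e∪S₋ ≠ ∅ and S_e∪S₊ ≠ ∅. Then as quadratic forms, Σ_𝐒 D_𝐒 is relatively bounded by H₀ with constant ||D||₀: for every state ψ, |⟨ψ, (Σ_𝐒 D_𝐒)ψ⟩| ≤ ||D||₀·⟨ψ, H₀ψ⟩, where ||D||₀ is the word norm at μ = 0. -/

import Mathlib

open scoped BigOperators
set_option linter.unusedSectionVars false
open Matrix

noncomputable section

namespace QLDPC

open scoped Classical

/-- The four Pauli matrices 1, X, Y, Z. -/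
def pauliMat : Fin 4 → Matrix (Fin 2) (Fin 2) ℂ
  | 0 => 1
  | 1 => !![0, 1; 1, 0]
  | 2 => !![0, -Complex.I; Complex.I, 0]
  | 3 => !![1, 0; 0, -1]

variable {Λ E : Type}

/-- Operators on the Hilbert space (ℂ²)^{⊗Λ}. -/
abbrev Op (Λ : Type) [Fintype Λ] [DecidableEq Λ] := Matrix (Λ → Fin 2) (Λ → Fin 2) ℂ

/-- The operator of a Pauli string `p : Λ → Fin 4`. -/
def pauliOp [Fintype Λ] [DecidableEq Λ] (p : Λ → Fin 4) : Op Λ :=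
  fun f g => ∏ x, pauliMat (p x) (f x) (g x)

/-- Qubit support of a Pauli string. -/
def psupp [Fintype Λ] (p : Λ → Fin 4) : Finset Λ :=
  Finset.univ.filter fun x => p x ≠ 0

/-- The operator norm (largest singular value). -/
def opNorm [Fintype Λ] [DecidableEq Λ] (A : Op Λ) : ℝ :=
  ‖Matrix.toEuclideanCLM (𝕜 := ℂ) A‖

/-- Coefficient of the Pauli string `p` in the Pauli-basis expansion of `A`. -/
def pauliCoeff [Fintype Λ] [DecidableEq Λ] (A : Op Λ) (p : Λ → Fin 4) : ℂ :=
  Matrix.trace (pauliOp p * A) / ((2 : ℂ) ^ Fintype.card Λ)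

/-- Qubit support of a general operator, via its Pauli expansion. -/
def opSupp [Fintype Λ] [DecidableEq Λ] (A : Op Λ) : Set Λ :=
  {x | ∃ p : Λ → Fin 4, pauliCoeff A p ≠ 0 ∧ p x ≠ 0}

/-- The data of a family of stabilizer checks: each check is a signed Pauli string. -/
structure Checks (Λ E : Type) where
  str : E → Λ → Fin 4
  sgn : E → Bool

variable [Fintype Λ] [DecidableEq Λ] [Fintype E]

/-- The operator of check α. -/
def checkOp (K : Checks Λ E) (α : E) : Op Λ :=
  (if K.sgn α then (-1 : ℂ) else 1) • pauliOp (K.str α)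

/-- G_α = (1 + C_α)/2. -/
def Gop (K : Checks Λ E) (α : E) : Op Λ := (2⁻¹ : ℂ) • (1 + checkOp K α)

/-- E_α = (1 - C_α)/2. -/
def Eop (K : Checks Λ E) (α : E) : Op Λ := (2⁻¹ : ℂ) • (1 - checkOp K α)

/-- The stabilizer Hamiltonian H₀ = Σ_α E_α. -/
def H0 (K : Checks Λ E) : Op Λ := ∑ α, Eop K α

/-- The stabilizer group 𝒢 generated by the checks (as a submonoid; each check squares to 1). -/
def stab (K : Checks Λ E) : Submonoid (Op Λ) :=
  Submonoid.closure (Set.range (checkOp K))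

/-- All checks pairwise commute (𝒢 abelian). -/
def CommChecks (K : Checks Λ E) : Prop := ∀ α β, Commute (checkOp K α) (checkOp K β)

/-- Check support of a qubit. -/
def suppC (K : Checks Λ E) (x : Λ) : Finset E :=
  Finset.univ.filter fun α => x ∈ psupp (K.str α)

/-- The qubit interaction graph. -/
def qubitGraph (K : Checks Λ E) : SimpleGraph Λ :=
  SimpleGraph.fromRel fun x y => ∃ α, x ∈ psupp (K.str α) ∧ y ∈ psupp (K.str α)

/-- The check interaction graph. -/
def checkGraph (K : Checks Λ E) : SimpleGraph E :=
  SimpleGraph.fromRel fun α β => (psupp (K.str α) ∩ psupp (K.str β)).Nonempty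

/-- `y` lies in the (closed) ball of radius `r` around `x` in the graph `G`. -/
def inBall {V : Type} (G : SimpleGraph V) (x y : V) (r : ℝ) : Prop :=
  G.Reachable x y ∧ (G.dist x y : ℝ) ≤ r

/-- Ball in the qubit graph. -/
def ballQ (K : Checks Λ E) (x : Λ) (r : ℝ) : Finset Λ :=
  Finset.univ.filter fun y => inBall (qubitGraph K) x y r

/-- Ball in the check graph. -/
def ballC (K : Checks Λ E) (α : E) (r : ℝ) : Finset E :=
  Finset.univ.filter fun β => inBall (checkGraph K) α β r

/-- Ball of radius `r` around a set of checks. -/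
def ballCS (K : Checks Λ E) (S : Finset E) (r : ℝ) : Finset E :=
  Finset.univ.filter fun β => ∃ α ∈ S, inBall (checkGraph K) α β r

/-- Growth of balls condition: |B_r| ≤ e^{κ r} on both graphs. -/
def BallGrowth (K : Checks Λ E) (κ : ℝ) : Prop :=
  (∀ (x : Λ) (r : ℝ), ((ballQ K x r).card : ℝ) ≤ Real.exp (κ * r)) ∧
  (∀ (α : E) (r : ℝ), ((ballC K α r).card : ℝ) ≤ Real.exp (κ * r))

/-- A finite set is connected in a graph if the induced subgraph is connected. -/
def ConnIn {V : Type} (G : SimpleGraph V) (S : Finset V) : Prop :=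
  (G.induce (S : Set V)).Connected

/-- Qubit support of a set of checks. -/
def suppSet (K : Checks Λ E) (S : Finset E) : Set Λ :=
  ↑(S.biUnion fun α => psupp (K.str α))

variable [LinearOrder E]

/-- Ordered product of operators over a finite set of check labels. -/
def ordProd (S : Finset E) (f : E → Op Λ) : Op Λ :=
  ((S.sort (· ≤ ·)).map f).prod

/-- The codespace projector P = ∏_α G_α (for commuting checks). -/
def Pmat (K : Checks Λ E) : Op Λ := ordProd Finset.univ (Gop K)

/-- The code distance: minimal support of a Pauli string p with P p P not proportional to P. -/
def codeDist (K : Checks Λ E) : ℕ :=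
  sInf ((fun p => (psupp p).card) ''
    {p : Λ → Fin 4 | ¬∃ cc : ℂ, Pmat K * pauliOp p * Pmat K = cc • Pmat K})

/-- TQO-I: Pauli strings of weight below the code distance commuting with 𝒢 belong to 𝒢. -/
def TQO1 (K : Checks Λ E) : Prop :=
  ∀ p : Λ → Fin 4, (psupp p).card < codeDist K →
    (∀ g ∈ stab K, Commute (pauliOp p) g) → pauliOp p ∈ stab K

/-- TQO-II: group elements locally supported on a small connected check set S are generated by
checks within distance ℓ|S| of S. -/
def TQO2 (K : Checks Λ E) (ℓ dtil : ℝ) : Prop :=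
  ∀ S : Finset E, ConnIn (checkGraph K) S → (S.card : ℝ) < dtil →
    ∀ g ∈ stab K, opSupp (g : Op Λ) ⊆ suppSet K S →
      (g : Op Λ) ∈ Submonoid.closure (checkOp K '' {α | ∃ β ∈ S, inBall (checkGraph K) β α (ℓ * S.card)})

/-! ### Words and operator-collections -/

/-- A word: a quadruple of pairwise disjoint subsets of the checks,
labelled (+, -, excited, ground). -/
structure Word (E : Type) where
  p : Finset E
  m : Finset E
  e : Finset E
  g : Finset E
  hpm : Disjoint p m
  hpe : Disjoint p e
  hpg : Disjoint p g
  hme : Disjoint m e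
  hmg : Disjoint m g
  heg : Disjoint e g

/-- The underlying set of the word. -/
def Word.S [DecidableEq E] (w : Word E) : Finset E := w.p ∪ w.m ∪ w.e ∪ w.g

instance : Fintype (Word E) := by
  classical
  exact Fintype.ofInjective (fun w : Word E => (w.p, w.m, w.e, w.g))
    (by
      rintro ⟨a1, a2, a3, a4, _, _, _, _, _, _⟩ ⟨b1, b2, b3, b4, _, _, _, _, _, _⟩ h
      simp only [Prod.mk.injEq] at h
      obtain ⟨h1, h2, h3, h4⟩ := h
      subst h1; subst h2; subst h3; subst h4; rfl)

/-- A word is a ghost if all components except the ground one are empty. -/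
def IsGhost (w : Word E) : Prop := w.p = ∅ ∧ w.m = ∅ ∧ w.e = ∅

/-- The empty word. -/
def emptyWord (E : Type) : Word E :=
  ⟨∅, ∅, ∅, ∅, by simp, by simp, by simp, by simp, by simp, by simp⟩

/-- Left projector assignment of a word. -/
def leftP (K : Checks Λ E) (w : Word E) (α : E) : Op Λ :=
  if α ∈ w.m ∪ w.g then Gop K α else Eop K α

/-- Right projector assignment of a word. -/
def rightP (K : Checks Λ E) (w : Word E) (α : E) : Op Λ :=
  if α ∈ w.p ∪ w.g then Gop K α else Eop K α

/-- The class 𝒳_𝐒 of operators compatible with the word 𝐒. -/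
def memClass (K : Checks Λ E) (w : Word E) (X : Op Λ) : Prop :=
  ∃ Y : Op Λ,
    (∀ α : E, (opSupp Y ∩ (psupp (K.str α) : Set Λ)).Nonempty → α ∈ w.S) ∧
    X = ordProd w.S (leftP K w) * Y * ordProd w.S (rightP K w)

/-- An operator-collection: a family (O_𝐒)_𝐒 with O_𝐒 ∈ 𝒳_𝐒. -/
def IsColl (K : Checks Λ E) (O : Word E → Op Λ) : Prop :=
  ∀ w, memClass K w (O w)

/-- The intensive word norm ‖O‖_μ of an operator-collection. -/
def wordNorm (μ : ℝ) (O : Word E → Op Λ) : ℝ :=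
  ⨆ α : E, ∑ w : Word E, (if α ∈ w.S then opNorm (O w) * Real.exp (μ * w.S.card) else 0)

/-! ### The multiplication table of words -/

/-- Labels of a check in a word: none, ground, excited, raising, lowering. -/
inductive Lbl | N | G | E | P | M
deriving DecidableEq

/-- The multiplication table of labels; `none` encodes that the product vanishes. -/
def lblMul : Lbl → Lbl → Option Lbl
  | .N, x => some x
  | .G, .N => some .G
  | .G, .G => some .G
  | .G, .E => none
  | .G, .P => none
  | .G, .M => some .M
  | .E, .N => some .E
  | .E, .G => none
  | .E, .E => some .E
  | .E, .P => some .P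
  | .E, .M => none
  | .P, .N => some .P
  | .P, .G => some .P
  | .P, .E => none
  | .P, .P => none
  | .P, .M => some .E
  | .M, .N => some .M
  | .M, .G => none
  | .M, .E => some .M
  | .M, .P => some .G
  | .M, .M => none

/-- The label of a check in a word. -/
def Word.lbl [DecidableEq E] (w : Word E) (α : E) : Lbl :=
  if α ∈ w.p then .P else if α ∈ w.m then .M else if α ∈ w.e then .E
  else if α ∈ w.g then .G else .N

/-- The product of two words is defined (the corresponding operator product does not vanish
identically by the multiplication table). -/
def MulDef (w' w : Word E) : Prop :=
  ∀ α : E, lblMul (w'.lbl α) (w.lbl α) ≠ none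

private lemma disj_aux {f : E → Option Lbl} {a b : Lbl} (hab : a ≠ b) :
    Disjoint (Finset.univ.filter fun α => f α = some a)
      (Finset.univ.filter fun α => f α = some b) := by
  rw [Finset.disjoint_left]
  intro x hx hy
  simp only [Finset.mem_filter] at hx hy
  exact hab (Option.some.inj (hx.2.symm.trans hy.2))

/-- The product word 𝐒'𝐒 (meaningful when `MulDef w' w`). -/
def wmul (w' w : Word E) : Word E where
  p := Finset.univ.filter fun α => lblMul (w'.lbl α) (w.lbl α) = some .P
  m := Finset.univ.filter fun α => lblMul (w'.lbl α) (w.lbl α) = some .M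
  e := Finset.univ.filter fun α => lblMul (w'.lbl α) (w.lbl α) = some .E
  g := Finset.univ.filter fun α => lblMul (w'.lbl α) (w.lbl α) = some .G
  hpm := disj_aux (by decide)
  hpe := disj_aux (by decide)
  hpg := disj_aux (by decide)
  hme := disj_aux (by decide)
  hmg := disj_aux (by decide)
  heg := disj_aux (by decide)

/-- The commutator of two operator-collections. -/
def collComm (O O' : Word E → Op Λ) : Word E → Op Λ := fun w =>
  ∑ w1 : Word E, ∑ w2 : Word E,
    if MulDef w1 w2 ∧ wmul w1 w2 = w ∧ (w1.S ∩ w2.S).Nonempty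
    then O w1 * O' w2 - O' w1 * O w2 else 0

/-- Iterated adjoint action ad_{B_k}⋯ad_{B_1}(B_0) of operator-collections. -/
def chainAd (B : ℕ → Word E → Op Λ) : ℕ → Word E → Op Λ
  | 0 => B 0
  | k + 1 => collComm (B (k + 1)) (chainAd B k)

/-- exp(i ad_A)(B) for operator-collections, defined componentwise. -/
def expAd (A B : Word E → Op Λ) : Word E → Op Λ := fun w =>
  ∑' k : ℕ, ((Complex.I ^ k / (k.factorial : ℂ)) • ((fun C => collComm A C)^[k] B) w)

/-! ### Sequences of words -/

/-- The running products 𝐒'_i of a sequence of words. -/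
def sprime (σ : ℕ → Word E) : ℕ → Word E
  | 0 => σ 0
  | i + 1 => wmul (σ (i + 1)) (sprime σ i)

/-- The running products with ghost words skipped. -/
def sprimeG (σ : ℕ → Word E) : ℕ → Word E
  | 0 => σ 0
  | i + 1 => if IsGhost (σ (i + 1)) then sprimeG σ i else wmul (σ (i + 1)) (sprimeG σ i)

/-- Extend a finite sequence of words by the empty word. -/
def extend {k : ℕ} (σ : Fin (k + 1) → Word E) : ℕ → Word E :=
  fun i => if h : i < k + 1 then σ ⟨i, h⟩ else emptyWord E

/-! ### Pauli norms -/

/-- Size of a minimal connected set of qubits containing the support of `p`. -/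
def mSize (K : Checks Λ E) (p : Λ → Fin 4) : ℕ :=
  sInf {n | ∃ T : Finset Λ, ConnIn (qubitGraph K) T ∧ psupp p ⊆ T ∧ T.card = n}

/-- The intensive Pauli norm of an operator given by Pauli coefficients `c`. -/
def pauliNormC (K : Checks Λ E) (μ : ℝ) (c : (Λ → Fin 4) → ℂ) : ℝ :=
  ⨆ x : Λ, ∑ p : Λ → Fin 4, (if p x ≠ 0 then ‖c p‖ * Real.exp (μ * (mSize K p : ℝ)) else 0)

/-- The intensive Pauli norm of an operator. -/
def pauliNormOp (K : Checks Λ E) (μ : ℝ) (A : Op Λ) : ℝ :=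
  pauliNormC K μ (pauliCoeff A)

/-- Diameter of the qubit graph. -/
def diam (K : Checks Λ E) : ℕ :=
  Finset.univ.sup fun pr : Λ × Λ => (qubitGraph K).dist pr.1 pr.2

/-- The spectral projector of a Hermitian matrix onto the eigenvalues in [-δ, δ]. -/
def spectralProjLE {n : Type} [Fintype n] [DecidableEq n] {A : Matrix n n ℂ}
    (hA : A.IsHermitian) (δ : ℝ) : Matrix n n ℂ :=
  (hA.eigenvectorUnitary : Matrix n n ℂ) *
    Matrix.diagonal (fun i => if |hA.eigenvalues i| ≤ δ then (1 : ℂ) else 0) *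
    star (hA.eigenvectorUnitary : Matrix n n ℂ)

end QLDPC

/-!
A nonzero `D_𝐒 ∈ 𝒳_𝐒` has an excitation projector on either side: the left factor at some
`b ∈ S_e ∪ S₊` is `E_b` and the right factor at some `a ∈ S_e ∪ S₋` is `E_a`. Since the checks
commute and `E_α` is idempotent, these absorb further copies, so `D_𝐒 = E_b D_𝐒 E_a`. As the `E_α`
are orthogonal projections, Cauchy–Schwarz and AM–GM give
`|⟨ψ, D_𝐒 ψ⟩| = |⟨E_b ψ, D_𝐒 E_a ψ⟩| ≤ ‖D_𝐒‖ (‖E_b ψ‖² + ‖E_a ψ‖²) / 2 ≤ ‖D_𝐒‖ Σ_{α ∈ S} ⟨ψ, E_α ψ⟩`.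
Summing over words and exchanging the sums bounds the total by `‖D‖₀ Σ_α ⟨ψ, E_α ψ⟩ = ‖D‖₀ ⟨ψ, H₀ ψ⟩`.
-/

namespace QLDPC

section PiKron

variable {ι n R : Type*} [Fintype ι] [CommSemiring R]

def piKron (M : ι → Matrix n n R) : Matrix (ι → n) (ι → n) R :=
  fun f g => ∏ x, M x (f x) (g x)

lemma piKron_mul [DecidableEq ι] [Fintype n] (M N : ι → Matrix n n R) :
    piKron M * piKron N = piKron (M * N) := by
  ext f g
  simp only [piKron, mul_apply, Pi.mul_apply, ← Finset.prod_mul_distrib]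
  rw [Finset.prod_univ_sum]
  exact Fintype.sum_equiv (Equiv.refl _) _ _ fun _ => rfl

lemma piKron_one [DecidableEq n] : piKron (1 : ι → Matrix n n R) = 1 := by
  ext f g
  by_cases h : f = g
  · subst h; simp [piKron]
  · obtain ⟨x, hx⟩ := Function.ne_iff.mp h
    rw [one_apply_ne h]
    exact Finset.prod_eq_zero (Finset.mem_univ x) (one_apply_ne hx)

lemma piKron_conjTranspose [StarRing R] (M : ι → Matrix n n R) :
    (piKron M)ᴴ = piKron fun x => (M x)ᴴ := by
  ext f g
  simp [piKron, conjTranspose_apply]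

end PiKron

lemma pauliMat_conjTranspose (i : Fin 4) : (pauliMat i)ᴴ = pauliMat i := by
  ext a b
  fin_cases i <;> fin_cases a <;> fin_cases b <;> simp [pauliMat, one_apply]

lemma pauliMat_mul_self (i : Fin 4) : pauliMat i * pauliMat i = 1 := by
  ext a b
  fin_cases i <;> fin_cases a <;> fin_cases b <;> simp [pauliMat, mul_apply, one_apply]

section Involution

variable {A : Type*} [Ring A] [StarRing A] [Algebra ℂ A] [StarModule ℂ A]

lemma isStarProjection_half_smul_one_sub {c : A} (hc : IsSelfAdjoint c) (hcc : c * c = 1) :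
    IsStarProjection ((2⁻¹ : ℂ) • (1 - c)) where
  isIdempotentElem := by
    have hsq : (1 - c) * (1 - c) = (2 : ℂ) • (1 - c) := by
      rw [sub_mul, one_mul, mul_sub, mul_one, hcc]
      module
    rw [IsIdempotentElem, smul_mul_smul, hsq, smul_smul]
    norm_num
  isSelfAdjoint := by
    simp only [IsSelfAdjoint, star_smul, star_sub, star_one, hc.star_eq, star_inv₀]
    norm_num

end Involution

variable {Λ E : Type} [Fintype Λ] [DecidableEq Λ]

lemma pauliOp_eq_piKron (p : Λ → Fin 4) : pauliOp p = piKron fun x => pauliMat (p x) := rfl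

lemma pauliOp_conjTranspose (p : Λ → Fin 4) : (pauliOp p)ᴴ = pauliOp p := by
  simp only [pauliOp_eq_piKron, piKron_conjTranspose, pauliMat_conjTranspose]

lemma pauliOp_mul_self (p : Λ → Fin 4) : pauliOp p * pauliOp p = 1 := by
  rw [pauliOp_eq_piKron, piKron_mul, ← piKron_one]
  congr 1
  ext1 x
  exact pauliMat_mul_self (p x)

lemma isSelfAdjoint_checkOp (K : Checks Λ E) (α : E) : IsSelfAdjoint (checkOp K α) := by
  rw [IsSelfAdjoint, checkOp, star_smul, star_eq_conjTranspose, pauliOp_conjTranspose]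
  split_ifs <;> simp

lemma checkOp_mul_self (K : Checks Λ E) (α : E) : checkOp K α * checkOp K α = 1 := by
  rw [checkOp, smul_mul_smul, pauliOp_mul_self]
  split_ifs <;> simp

lemma isStarProjection_Eop (K : Checks Λ E) (α : E) : IsStarProjection (Eop K α) :=
  isStarProjection_half_smul_one_sub (isSelfAdjoint_checkOp K α) (checkOp_mul_self K α)

lemma commute_Eop_Eop {K : Checks Λ E} {α β : E} (h : Commute (checkOp K α) (checkOp K β)) :
    Commute (Eop K α) (Eop K β) :=
  (((Commute.one_left _).sub_left ((Commute.one_right _).sub_right h)).smul_left _).smul_right _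

lemma commute_Eop_Gop {K : Checks Λ E} {α β : E} (h : Commute (checkOp K α) (checkOp K β)) :
    Commute (Eop K α) (Gop K β) :=
  (((Commute.one_left _).sub_left ((Commute.one_right _).add_right h)).smul_left _).smul_right _

section ListProd

variable {M : Type*} [Monoid M] {x : M} {l : List M}

lemma IsIdempotentElem.mul_list_prod_of_mem (hx : IsIdempotentElem x) (hmem : x ∈ l)
    (hc : ∀ y ∈ l, Commute x y) : x * l.prod = l.prod := by
  obtain ⟨s, t, rfl⟩ := List.append_of_mem hmem
  have hs : Commute x s.prod := Commute.list_prod_right _ _ fun y hy => hc y (by simp [hy])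
  rw [List.prod_append, List.prod_cons, ← mul_assoc, hs.eq, mul_assoc, ← mul_assoc x, hx.eq]

lemma IsIdempotentElem.list_prod_mul_of_mem (hx : IsIdempotentElem x) (hmem : x ∈ l)
    (hc : ∀ y ∈ l, Commute x y) : l.prod * x = l.prod := by
  rw [← (Commute.list_prod_right l x hc).eq, IsIdempotentElem.mul_list_prod_of_mem hx hmem hc]

end ListProd

section OrdProd

variable [LinearOrder E] {S : Finset E} {f : E → Op Λ} {a : E}

lemma mem_map_sort_of_mem {M : Type*} {f : E → M} (ha : a ∈ S) :
    f a ∈ (S.sort (· ≤ ·)).map f :=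
  List.mem_map_of_mem (by simpa using ha)

lemma commute_of_mem_map_sort {M : Type*} [Mul M] {f : E → M} {x : M} (hc : ∀ β ∈ S, Commute x (f β)) :
    ∀ y ∈ (S.sort (· ≤ ·)).map f, Commute x y := by
  simp only [List.mem_map, Finset.mem_sort]
  rintro _ ⟨β, hβ, rfl⟩
  exact hc β hβ

lemma mul_ordProd_of_mem {x : Op Λ} (hx : IsIdempotentElem x) (ha : a ∈ S) (hfa : f a = x)
    (hc : ∀ β ∈ S, Commute x (f β)) : x * ordProd S f = ordProd S f :=
  IsIdempotentElem.mul_list_prod_of_mem hx (hfa ▸ mem_map_sort_of_mem ha)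
    (commute_of_mem_map_sort hc)

lemma ordProd_mul_of_mem {x : Op Λ} (hx : IsIdempotentElem x) (ha : a ∈ S) (hfa : f a = x)
    (hc : ∀ β ∈ S, Commute x (f β)) : ordProd S f * x = ordProd S f :=
  IsIdempotentElem.list_prod_mul_of_mem hx (hfa ▸ mem_map_sort_of_mem ha)
    (commute_of_mem_map_sort hc)

end OrdProd

section InnerProduct

open RCLike InnerProductSpace

variable {𝕜 H : Type*} [RCLike 𝕜] [NormedAddCommGroup H] [InnerProductSpace 𝕜 H] [CompleteSpace H]
  {P Q T : H →L[𝕜] H}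

lemma re_inner_apply_self_of_isStarProjection (hP : IsStarProjection P) (x : H) :
    re ⟪x, P x⟫_𝕜 = ‖P x‖ ^ 2 := by
  have hPP : P (P x) = P x := DFunLike.congr_fun hP.isIdempotentElem x
  have hx : ⟪P x, P x⟫_𝕜 = ⟪x, P x⟫_𝕜 := by
    simpa only [ContinuousLinearMap.coe_coe, hPP] using hP.isSelfAdjoint.isSymmetric x (P x)
  rw [← hx, inner_self_eq_norm_sq]

lemma norm_inner_apply_le_of_mul_mul_eq (hP : IsStarProjection P) (hQ : IsStarProjection Q)
    (hT : P * T * Q = T) (x : H) :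
    ‖⟪x, T x⟫_𝕜‖ ≤ ‖T‖ * ((re ⟪x, P x⟫_𝕜 + re ⟪x, Q x⟫_𝕜) / 2) := by
  have hx : ⟪x, T x⟫_𝕜 = ⟪P x, T (Q x)⟫_𝕜 := by
    conv_lhs => rw [← hT]
    exact (hP.isSelfAdjoint.isSymmetric x (T (Q x))).symm
  rw [hx, re_inner_apply_self_of_isStarProjection hP, re_inner_apply_self_of_isStarProjection hQ]
  calc ‖⟪P x, T (Q x)⟫_𝕜‖ ≤ ‖P x‖ * (‖T‖ * ‖Q x‖) :=
        (norm_inner_le_norm _ _).trans (mul_le_mul_of_nonneg_left (T.le_opNorm _) (norm_nonneg _))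
    _ ≤ ‖T‖ * ((‖P x‖ ^ 2 + ‖Q x‖ ^ 2) / 2) := by
        nlinarith [mul_nonneg (norm_nonneg T) (sq_nonneg (‖P x‖ - ‖Q x‖))]

end InnerProduct

section QuadraticForm

open RCLike WithLp InnerProductSpace

variable {𝕜 n : Type*} [RCLike 𝕜] [Fintype n] [DecidableEq n] {A P Q : Matrix n n 𝕜}

lemma star_dotProduct_mulVec_eq_inner (A : Matrix n n 𝕜) (ψ : n → 𝕜) :
    star ψ ⬝ᵥ A *ᵥ ψ = ⟪toLp 2 ψ, toEuclideanCLM (𝕜 := 𝕜) A (toLp 2 ψ)⟫_𝕜 := by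
  rw [toEuclideanCLM_toLp, EuclideanSpace.inner_toLp_toLp, dotProduct_comm]

lemma re_star_dotProduct_mulVec_nonneg (hP : IsStarProjection P) (ψ : n → 𝕜) :
    0 ≤ re (star ψ ⬝ᵥ P *ᵥ ψ) := by
  rw [star_dotProduct_mulVec_eq_inner,
    re_inner_apply_self_of_isStarProjection (hP.map toEuclideanCLM)]
  positivity

lemma norm_star_dotProduct_mulVec_le (hP : IsStarProjection P) (hQ : IsStarProjection Q)
    (hA : P * A * Q = A) (ψ : n → 𝕜) :
    ‖star ψ ⬝ᵥ A *ᵥ ψ‖ ≤ ‖toEuclideanCLM (𝕜 := 𝕜) A‖ *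
      ((re (star ψ ⬝ᵥ P *ᵥ ψ) + re (star ψ ⬝ᵥ Q *ᵥ ψ)) / 2) := by
  simp only [star_dotProduct_mulVec_eq_inner]
  exact norm_inner_apply_le_of_mul_mul_eq (hP.map toEuclideanCLM) (hQ.map toEuclideanCLM)
    (by rw [← map_mul, ← map_mul, hA]) _

end QuadraticForm

section Words

variable [LinearOrder E] {K : Checks Λ E} {w : Word E} {α : E}

lemma Word.mem_S_of_mem_e_union_p (h : α ∈ w.e ∪ w.p) : α ∈ w.S := by
  simp only [Word.S, Finset.mem_union] at h ⊢
  tauto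

lemma Word.mem_S_of_mem_e_union_m (h : α ∈ w.e ∪ w.m) : α ∈ w.S := by
  simp only [Word.S, Finset.mem_union] at h ⊢
  tauto

lemma leftP_eq_Eop (h : α ∈ w.e ∪ w.p) : leftP K w α = Eop K α := by
  rw [leftP, if_neg]
  simp only [Finset.mem_union, not_or]
  rcases Finset.mem_union.mp h with h | h
  · exact ⟨Finset.disjoint_right.mp w.hme h, Finset.disjoint_left.mp w.heg h⟩
  · exact ⟨Finset.disjoint_left.mp w.hpm h, Finset.disjoint_left.mp w.hpg h⟩

lemma rightP_eq_Eop (h : α ∈ w.e ∪ w.m) : rightP K w α = Eop K α := by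
  rw [rightP, if_neg]
  simp only [Finset.mem_union, not_or]
  rcases Finset.mem_union.mp h with h | h
  · exact ⟨Finset.disjoint_right.mp w.hpe h, Finset.disjoint_left.mp w.heg h⟩
  · exact ⟨Finset.disjoint_right.mp w.hpm h, Finset.disjoint_left.mp w.hmg h⟩

lemma commute_Eop_leftP (hcomm : CommChecks K) (α β : E) : Commute (Eop K α) (leftP K w β) := by
  unfold leftP
  split_ifs
  exacts [commute_Eop_Gop (hcomm α β), commute_Eop_Eop (hcomm α β)]

lemma commute_Eop_rightP (hcomm : CommChecks K) (α β : E) :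
    Commute (Eop K α) (rightP K w β) := by
  unfold rightP
  split_ifs
  exacts [commute_Eop_Gop (hcomm α β), commute_Eop_Eop (hcomm α β)]

lemma Eop_mul_mul_Eop_of_memClass (hcomm : CommChecks K) {X : Op Λ} (hX : memClass K w X)
    {a b : E} (hb : b ∈ w.e ∪ w.p) (ha : a ∈ w.e ∪ w.m) : Eop K b * X * Eop K a = X := by
  obtain ⟨Y, -, rfl⟩ := hX
  have hL := mul_ordProd_of_mem (isStarProjection_Eop K b).isIdempotentElem
    (Word.mem_S_of_mem_e_union_p hb) (leftP_eq_Eop hb) fun β _ => commute_Eop_leftP hcomm b β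
  have hR := ordProd_mul_of_mem (isStarProjection_Eop K a).isIdempotentElem
    (Word.mem_S_of_mem_e_union_m ha) (rightP_eq_Eop ha) fun β _ => commute_Eop_rightP hcomm a β
  simp only [mul_assoc, hR]
  simp only [← mul_assoc, hL]

lemma norm_star_dotProduct_mulVec_le_of_memClass (hcomm : CommChecks K) {X : Op Λ}
    (hX : memClass K w X) (hw : X ≠ 0 → (w.e ∪ w.m).Nonempty ∧ (w.e ∪ w.p).Nonempty)
    (ψ : (Λ → Fin 2) → ℂ) :
    ‖star ψ ⬝ᵥ X *ᵥ ψ‖ ≤ opNorm X * ∑ α ∈ w.S, (star ψ ⬝ᵥ Eop K α *ᵥ ψ).re := by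
  rcases eq_or_ne X 0 with rfl | hX0
  · simp [opNorm]
  obtain ⟨⟨a, ha⟩, ⟨b, hb⟩⟩ := hw hX0
  have hnonneg (α : E) : 0 ≤ (star ψ ⬝ᵥ Eop K α *ᵥ ψ).re :=
    re_star_dotProduct_mulVec_nonneg (isStarProjection_Eop K α) ψ
  have hbS := Finset.single_le_sum (fun α _ => hnonneg α) (Word.mem_S_of_mem_e_union_p hb)
  have haS := Finset.single_le_sum (fun α _ => hnonneg α) (Word.mem_S_of_mem_e_union_m ha)
  calc ‖star ψ ⬝ᵥ X *ᵥ ψ‖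
      ≤ opNorm X * (((star ψ ⬝ᵥ Eop K b *ᵥ ψ).re + (star ψ ⬝ᵥ Eop K a *ᵥ ψ).re) / 2) :=
        norm_star_dotProduct_mulVec_le (isStarProjection_Eop K b) (isStarProjection_Eop K a)
          (Eop_mul_mul_Eop_of_memClass hcomm hX hb ha) ψ
    _ ≤ _ := by gcongr; exacts [norm_nonneg _, by linarith]

end Words

lemma wordNorm_zero [Fintype E] [LinearOrder E] (O : Word E → Op Λ) :
    wordNorm 0 O = ⨆ α : E, ∑ w : Word E, if α ∈ w.S then opNorm (O w) else 0 := by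
  simp only [wordNorm, zero_mul, Real.exp_zero, mul_one]

lemma sum_mul_sum_le_iSup_mul_sum {ι κ : Type*} [Fintype ι] [Fintype κ] [DecidableEq κ]
    (s : ι → Finset κ) (c : ι → ℝ) {t : κ → ℝ} (ht : ∀ k, 0 ≤ t k) :
    ∑ i, c i * ∑ k ∈ s i, t k ≤ (⨆ k, ∑ i, if k ∈ s i then c i else 0) * ∑ k, t k := by
  calc ∑ i, c i * ∑ k ∈ s i, t k = ∑ k, (∑ i, if k ∈ s i then c i else 0) * t k := by
        simp only [Finset.mul_sum, Finset.sum_mul, ite_mul, zero_mul]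
        rw [Finset.sum_comm]
        refine Finset.sum_congr rfl fun i _ => ?_
        rw [← Finset.sum_filter, Finset.filter_mem_eq_inter, Finset.univ_inter]
    _ ≤ ∑ k, (⨆ k, ∑ i, if k ∈ s i then c i else 0) * t k :=
        Finset.sum_le_sum fun k _ =>
          mul_le_mul_of_nonneg_right
            (le_ciSup (f := fun k => ∑ i, if k ∈ s i then c i else 0)
              (Set.finite_range _).bddAbove k) (ht k)
    _ = _ := (Finset.mul_sum _ _ _).symm

/-- **Relative form-boundedness of `D` by `H₀`.**
If every nonzero word of the operator-collection `D` satisfies `S_e ∪ S₋ ≠ ∅` and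
`S_e ∪ S₊ ≠ ∅`, then for every state `ψ`,
`|⟨ψ, (Σ_𝐒 D_𝐒) ψ⟩| ≤ ‖D‖₀ ⟨ψ, H₀ ψ⟩`. -/
theorem D_form_bounded {Λ E : Type} [Fintype Λ] [DecidableEq Λ] [Fintype E]
    [LinearOrder E] (K : Checks Λ E) (hcomm : CommChecks K)
    (D : Word E → Op Λ) (hcoll : IsColl K D)
    (hD : ∀ w : Word E, D w ≠ 0 → (w.e ∪ w.m).Nonempty ∧ (w.e ∪ w.p).Nonempty) :
    ∀ ψ : (Λ → Fin 2) → ℂ,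
      ‖star ψ ⬝ᵥ (∑ w : Word E, D w).mulVec ψ‖ ≤
        wordNorm 0 D * (star ψ ⬝ᵥ (H0 K).mulVec ψ).re := by
  intro ψ
  have hH0 : (star ψ ⬝ᵥ (H0 K).mulVec ψ).re = ∑ α, (star ψ ⬝ᵥ Eop K α *ᵥ ψ).re := by
    rw [H0, sum_mulVec, dotProduct_sum, Complex.re_sum]
  calc ‖star ψ ⬝ᵥ (∑ w, D w).mulVec ψ‖ = ‖∑ w, star ψ ⬝ᵥ D w *ᵥ ψ‖ := by
        rw [sum_mulVec, dotProduct_sum]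
    _ ≤ ∑ w, ‖star ψ ⬝ᵥ D w *ᵥ ψ‖ := norm_sum_le _ _
    _ ≤ ∑ w, opNorm (D w) * ∑ α ∈ w.S, (star ψ ⬝ᵥ Eop K α *ᵥ ψ).re :=
        Finset.sum_le_sum fun w _ =>
          norm_star_dotProduct_mulVec_le_of_memClass hcomm (hcoll w) (hD w) ψ
    _ ≤ wordNorm 0 D * (star ψ ⬝ᵥ (H0 K).mulVec ψ).re := by
        rw [wordNorm_zero, hH0]
        exact sum_mul_sum_le_iSup_mul_sum _ _ fun α =>
          re_star_dotProduct_mulVec_nonneg (isStarProjection_Eop K α) ψ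

end QLDPC
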